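/- Let a ≥ 0, let p = (2+a)/2, and let ε ∈ (0, (2+a)/2). There exists a constant c = c(a,ε) such that for all y₁, y₂ on the unit circle ∂D₀, ∫_{D₀} (1 − |x|)^a · |P₀(x,y₁) − P₀(x,y₂)|^p dx ≤ c·|y₁ − y₂|^{(2+a)/2 − ε}. -/

import Mathlib

/-!
Write `rᵢ = ‖yᵢ - x‖`, `m = min r₁ r₂` and `δ = ‖y₁ - y₂‖`, so that `1 - ‖x‖ ≤ m`. The kernel
difference is bounded both by `1/m` and, through `|r₁⁻² - r₂⁻²| ≤ 2 |r₁ - r₂| / m³`, by `δ/m²`.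
Interpolating between the two bounds with weights `ε` and `p - ε` and using `(1 - ‖x‖)^a ≤ m^a`,
the integrand is `≲ δ^(p-ε) m^(ε-2) ≤ δ^(p-ε) (r₁^(ε-2) + r₂^(ε-2))`, since `a + ε - 2p = ε - 2`.
As `ε - 2 > -2`, the integral of `rᵢ^(ε-2)` over the disc is finite, uniformly in `yᵢ`.
-/

open MeasureTheory

/-- The Poisson kernel of the unit disc, viewed in `ℂ ≃ ℝ²`. -/
noncomputable def poissonKernelUnitDisc (x y : ℂ) : ℝ :=
  (1 / (2 * Real.pi)) * (1 - ‖x‖ ^ 2) / ‖y - x‖ ^ 2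

open Real Metric

section AddHaar

variable {E : Type*} [NormedAddCommGroup E] [NormedSpace ℝ E] [FiniteDimensional ℝ E]
  [MeasurableSpace E] [BorelSpace E] {μ : Measure E} [μ.IsAddHaarMeasure] {s : ℝ}

lemma integrableOn_ball_norm_rpow (hd : 1 ≤ Module.finrank ℝ E)
    (hs : -(Module.finrank ℝ E : ℝ) < s) (r : ℝ) :
    IntegrableOn (fun x : E => ‖x‖ ^ s) (ball 0 r) μ :=
  integrableOn_ball_of_norm_le_rpow (C := 1) (α := -s) hd (by linarith)
    (ae_of_all _ fun x => by simp [abs_of_nonneg (rpow_nonneg (norm_nonneg x) s)])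
    (by fun_prop : Measurable _).aestronglyMeasurable

lemma integrableOn_ball_norm_sub_rpow_and_setIntegral_le (hd : 1 ≤ Module.finrank ℝ E)
    (hs : -(Module.finrank ℝ E : ℝ) < s) (y : E) {r R : ℝ} (hR : ‖y‖ + r ≤ R) :
    IntegrableOn (fun x => ‖y - x‖ ^ s) (ball 0 r) μ ∧
      ∫ x in ball 0 r, ‖y - x‖ ^ s ∂μ ≤ ∫ x in ball 0 R, ‖x‖ ^ s ∂μ := by
  have hmp := Measure.measurePreserving_sub_left μ y
  have hemb := (MeasurableEquiv.subLeft y).measurableEmbedding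
  have hint : IntegrableOn (fun x => ‖y - x‖ ^ s) ((y - ·) ⁻¹' ball 0 R) μ :=
    (hmp.integrableOn_comp_preimage hemb).2 (integrableOn_ball_norm_rpow hd hs R)
  have hsub : ball (0 : E) r ⊆ (y - ·) ⁻¹' ball 0 R := fun x hx => by
    rw [Set.mem_preimage, mem_ball_zero_iff] at *
    linarith [norm_sub_le y x]
  refine ⟨hint.mono_set hsub, ?_⟩
  calc ∫ x in ball 0 r, ‖y - x‖ ^ s ∂μ
      ≤ ∫ x in (y - ·) ⁻¹' ball 0 R, ‖y - x‖ ^ s ∂μ :=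
        setIntegral_mono_set hint (ae_of_all _ fun x => by positivity) hsub.eventuallyLE
    _ = ∫ x in ball 0 R, ‖x‖ ^ s ∂μ := hmp.setIntegral_preimage_emb hemb (‖·‖ ^ s) _

end AddHaar

lemma rpow_le_of_le_div_of_le_mul_div {d A δ m ε p : ℝ} (hd : 0 ≤ d) (hA : 0 ≤ A) (hδ : 0 ≤ δ)
    (hm : 0 < m) (h₁ : d ≤ A / m) (h₂ : d ≤ A * δ / m ^ 2) (hε : 0 ≤ ε) (hεp : ε ≤ p) :
    d ^ p ≤ A ^ p * δ ^ (p - ε) * m ^ (ε - 2 * p) := by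
  have hpε : 0 ≤ p - ε := sub_nonneg.2 hεp
  calc d ^ p = d ^ ε * d ^ (p - ε) := by rw [← rpow_add_of_nonneg hd hε hpε, add_sub_cancel]
    _ ≤ (A / m) ^ ε * (A * δ / m ^ 2) ^ (p - ε) := by gcongr
    _ = A ^ p * δ ^ (p - ε) * m ^ (ε - 2 * p) := by
      have hA_split : A ^ p = A ^ ε * A ^ (p - ε) := by
        rw [← rpow_add_of_nonneg hA hε hpε, add_sub_cancel]
      have hm_split : m ^ (ε - 2 * p) = (m ^ ε * m ^ (2 * (p - ε)))⁻¹ := by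
        rw [← rpow_add hm, ← rpow_neg hm.le]; ring_nf
      rw [div_rpow hA hm.le, div_rpow (by positivity) (by positivity), mul_rpow hA hδ,
        ← rpow_natCast m 2, ← rpow_mul hm.le, hA_split, hm_split]
      push_cast
      field_simp

lemma abs_inv_sq_sub_inv_sq_le {r₁ r₂ m : ℝ} (hm : 0 < m) (h₁ : m ≤ r₁) (h₂ : m ≤ r₂) :
    |(r₁ ^ 2)⁻¹ - (r₂ ^ 2)⁻¹| ≤ 2 * |r₁ - r₂| / m ^ 3 := by
  have hr₁ : 0 < r₁ := hm.trans_le h₁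
  have hr₂ : 0 < r₂ := hm.trans_le h₂
  have hm₁ : m ^ 3 * r₁ ≤ r₁ ^ 2 * r₂ ^ 2 := by
    have := pow_le_pow_left₀ hm.le h₂ 2
    nlinarith [mul_le_mul h₁ this (by positivity) hr₁.le]
  have hm₂ : m ^ 3 * r₂ ≤ r₁ ^ 2 * r₂ ^ 2 := by
    have := pow_le_pow_left₀ hm.le h₁ 2
    nlinarith [mul_le_mul h₂ this (by positivity) hr₂.le]
  rw [inv_sub_inv (by positivity) (by positivity), abs_div,
    abs_of_pos (by positivity : 0 < r₁ ^ 2 * r₂ ^ 2),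
    div_le_div_iff₀ (by positivity) (by positivity),
    show r₂ ^ 2 - r₁ ^ 2 = (r₁ - r₂) * -(r₁ + r₂) by ring, abs_mul, abs_neg,
    abs_of_pos (by positivity : 0 < r₁ + r₂)]
  nlinarith [abs_nonneg (r₁ - r₂)]

section PoissonKernel

variable {x y y₁ y₂ : ℂ} {m : ℝ}

lemma poissonKernelUnitDisc_nonneg (hx : ‖x‖ ≤ 1) : 0 ≤ poissonKernelUnitDisc x y := by
  have : 0 ≤ 1 - ‖x‖ ^ 2 := by nlinarith [norm_nonneg x]
  unfold poissonKernelUnitDisc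
  positivity

lemma one_sub_norm_sq_le_two_mul_norm_sub (hx : ‖x‖ ≤ 1) (hy : ‖y‖ = 1) :
    1 - ‖x‖ ^ 2 ≤ 2 * ‖y - x‖ := by
  have := hy ▸ norm_sub_norm_le y x
  nlinarith [norm_nonneg x]

lemma poissonKernelUnitDisc_le (hx : ‖x‖ ≤ 1) (hy : ‖y‖ = 1) (hm : 0 < m) (hmy : m ≤ ‖y - x‖) :
    poissonKernelUnitDisc x y ≤ 1 / (π * m) := by
  have hr : 0 < ‖y - x‖ := hm.trans_le hmy
  calc poissonKernelUnitDisc x y ≤ 1 / (2 * π) * (2 * ‖y - x‖) / ‖y - x‖ ^ 2 := by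
        unfold poissonKernelUnitDisc
        gcongr
        exact one_sub_norm_sq_le_two_mul_norm_sub hx hy
    _ = 1 / (π * ‖y - x‖) := by field_simp
    _ ≤ 1 / (π * m) := by gcongr

lemma abs_poissonKernelUnitDisc_sub_le_div (hx : ‖x‖ ≤ 1) (hy₁ : ‖y₁‖ = 1) (hy₂ : ‖y₂‖ = 1)
    (hm : 0 < m) (h₁ : m ≤ ‖y₁ - x‖) (h₂ : m ≤ ‖y₂ - x‖) :
    |poissonKernelUnitDisc x y₁ - poissonKernelUnitDisc x y₂| ≤ 1 / (π * m) :=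
  abs_sub_le_of_nonneg_of_le (poissonKernelUnitDisc_nonneg hx)
    (poissonKernelUnitDisc_le hx hy₁ hm h₁) (poissonKernelUnitDisc_nonneg hx)
    (poissonKernelUnitDisc_le hx hy₂ hm h₂)

lemma abs_poissonKernelUnitDisc_sub_le_mul_div (hx : ‖x‖ ≤ 1) (hm : 0 < m) (hxm : 1 - ‖x‖ ≤ m)
    (h₁ : m ≤ ‖y₁ - x‖) (h₂ : m ≤ ‖y₂ - x‖) :
    |poissonKernelUnitDisc x y₁ - poissonKernelUnitDisc x y₂| ≤ 2 / π * ‖y₁ - y₂‖ / m ^ 2 := by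
  have hs : 0 ≤ 1 - ‖x‖ ^ 2 := by nlinarith [norm_nonneg x]
  have hsm : 1 - ‖x‖ ^ 2 ≤ 2 * m := by nlinarith [norm_nonneg x]
  have hδ : |‖y₁ - x‖ - ‖y₂ - x‖| ≤ ‖y₁ - y₂‖ := by
    simpa using abs_norm_sub_norm_le (y₁ - x) (y₂ - x)
  calc |poissonKernelUnitDisc x y₁ - poissonKernelUnitDisc x y₂|
      = (1 - ‖x‖ ^ 2) / (2 * π) * |(‖y₁ - x‖ ^ 2)⁻¹ - (‖y₂ - x‖ ^ 2)⁻¹| := by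
        rw [← abs_of_nonneg (by positivity : 0 ≤ (1 - ‖x‖ ^ 2) / (2 * π)), ← abs_mul]
        unfold poissonKernelUnitDisc
        ring_nf
    _ ≤ 2 * m / (2 * π) * (2 * ‖y₁ - y₂‖ / m ^ 3) := by
        gcongr
        exact (abs_inv_sq_sub_inv_sq_le hm h₁ h₂).trans (by gcongr)
    _ = 2 / π * ‖y₁ - y₂‖ / m ^ 2 := by field_simp

lemma one_sub_norm_rpow_mul_abs_poissonKernelUnitDisc_sub_rpow_le {a ε : ℝ} (ha : 0 ≤ a)
    (hε : 0 ≤ ε) (hεa : ε ≤ (2 + a) / 2) (hx : ‖x‖ < 1) (hy₁ : ‖y₁‖ = 1) (hy₂ : ‖y₂‖ = 1) :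
    (1 - ‖x‖) ^ a * |poissonKernelUnitDisc x y₁ - poissonKernelUnitDisc x y₂| ^ ((2 + a) / 2)
      ≤ (2 / π) ^ ((2 + a) / 2) * ‖y₁ - y₂‖ ^ ((2 + a) / 2 - ε)
          * (‖y₁ - x‖ ^ (ε - 2) + ‖y₂ - x‖ ^ (ε - 2)) := by
  set m := min ‖y₁ - x‖ ‖y₂ - x‖ with hm_def
  have hxm : 1 - ‖x‖ ≤ m := le_min (hy₁ ▸ norm_sub_norm_le y₁ x) (hy₂ ▸ norm_sub_norm_le y₂ x)
  have hm : 0 < m := by linarith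
  have hdiv : |poissonKernelUnitDisc x y₁ - poissonKernelUnitDisc x y₂| ≤ 2 / π / m :=
    (abs_poissonKernelUnitDisc_sub_le_div hx.le hy₁ hy₂ hm (min_le_left _ _)
      (min_le_right _ _)).trans (by rw [div_div]; gcongr; norm_num)
  have hmul := abs_poissonKernelUnitDisc_sub_le_mul_div hx.le hm hxm (min_le_left _ _)
    (min_le_right _ _)
  have hm_le : m ^ (ε - 2) ≤ ‖y₁ - x‖ ^ (ε - 2) + ‖y₂ - x‖ ^ (ε - 2) := by
    rcases min_choice ‖y₁ - x‖ ‖y₂ - x‖ with h | h <;> rw [← hm_def] at h <;> rw [h]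
    · linarith [rpow_nonneg (norm_nonneg (y₂ - x)) (ε - 2)]
    · linarith [rpow_nonneg (norm_nonneg (y₁ - x)) (ε - 2)]
  calc (1 - ‖x‖) ^ a * |poissonKernelUnitDisc x y₁ - poissonKernelUnitDisc x y₂| ^ ((2 + a) / 2)
      ≤ m ^ a * ((2 / π) ^ ((2 + a) / 2) * ‖y₁ - y₂‖ ^ ((2 + a) / 2 - ε)
          * m ^ (ε - 2 * ((2 + a) / 2))) := by
        gcongr
        exact rpow_le_of_le_div_of_le_mul_div (abs_nonneg _) (by positivity) (norm_nonneg _) hm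
          hdiv hmul hε hεa
    _ = (2 / π) ^ ((2 + a) / 2) * ‖y₁ - y₂‖ ^ ((2 + a) / 2 - ε) * m ^ (ε - 2) := by
        rw [mul_left_comm, ← rpow_add hm]
        ring_nf
    _ ≤ _ := by gcongr

lemma setIntegral_one_sub_norm_rpow_mul_abs_poissonKernelUnitDisc_sub_rpow_le {a ε : ℝ}
    (ha : 0 ≤ a) (hε : 0 < ε) (hεa : ε ≤ (2 + a) / 2) (hy₁ : ‖y₁‖ = 1) (hy₂ : ‖y₂‖ = 1) :
    ∫ x in ball (0 : ℂ) 1,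
        (1 - ‖x‖) ^ a * |poissonKernelUnitDisc x y₁ - poissonKernelUnitDisc x y₂| ^ ((2 + a) / 2)
      ≤ (2 / π) ^ ((2 + a) / 2) * (2 * ∫ x in ball (0 : ℂ) 2, ‖x‖ ^ (ε - 2))
          * ‖y₁ - y₂‖ ^ ((2 + a) / 2 - ε) := by
  have hd : 1 ≤ Module.finrank ℝ ℂ := by simp [Complex.finrank_real_complex]
  have hs : -(Module.finrank ℝ ℂ : ℝ) < ε - 2 := by
    simp only [Complex.finrank_real_complex]; push_cast; linarith
  obtain ⟨hint₁, hle₁⟩ := integrableOn_ball_norm_sub_rpow_and_setIntegral_le (μ := volume) hd hs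
    y₁ (r := 1) (R := 2) (by rw [hy₁]; norm_num)
  obtain ⟨hint₂, hle₂⟩ := integrableOn_ball_norm_sub_rpow_and_setIntegral_le (μ := volume) hd hs
    y₂ (r := 1) (R := 2) (by rw [hy₂]; norm_num)
  set C := (2 / π) ^ ((2 + a) / 2) * ‖y₁ - y₂‖ ^ ((2 + a) / 2 - ε)
  calc ∫ x in ball (0 : ℂ) 1,
        (1 - ‖x‖) ^ a * |poissonKernelUnitDisc x y₁ - poissonKernelUnitDisc x y₂| ^ ((2 + a) / 2)
      ≤ ∫ x in ball (0 : ℂ) 1, C * (‖y₁ - x‖ ^ (ε - 2) + ‖y₂ - x‖ ^ (ε - 2)) := by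
        refine integral_mono_of_nonneg ?_ ((hint₁.add hint₂).const_mul C) ?_ <;>
          filter_upwards [ae_restrict_mem measurableSet_ball] with x hx <;>
          have hx : ‖x‖ < 1 := mem_ball_zero_iff.1 hx
        · exact mul_nonneg (rpow_nonneg (by linarith) _) (by positivity)
        · exact one_sub_norm_rpow_mul_abs_poissonKernelUnitDisc_sub_rpow_le ha hε.le hεa hx hy₁ hy₂
    _ = C * ((∫ x in ball (0 : ℂ) 1, ‖y₁ - x‖ ^ (ε - 2))
          + ∫ x in ball (0 : ℂ) 1, ‖y₂ - x‖ ^ (ε - 2)) := by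
        rw [integral_const_mul, integral_add hint₁ hint₂]
    _ ≤ C * ((∫ x in ball (0 : ℂ) 2, ‖x‖ ^ (ε - 2)) + ∫ x in ball (0 : ℂ) 2, ‖x‖ ^ (ε - 2)) := by
        gcongr
    _ = _ := by ring

end PoissonKernel

/-- Lemma 4.1(a), case `p = (2+a)/2`: for any `ε ∈ (0,(2+a)/2)` there is `c = c(a,ε)` such
that for all `y₁, y₂` on the unit circle,
`∫_{D₀} (1 − |x|)^a·|P₀(x,y₁) − P₀(x,y₂)|^{(2+a)/2} dx ≤ c·|y₁ − y₂|^{(2+a)/2 − ε}`. -/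
theorem integral_abs_poissonKernel_sub_rpow_le_of_eq (a p ε : ℝ) (ha : 0 ≤ a)
    (hpa : p = (2 + a) / 2) (hε : 0 < ε) (hε' : ε < (2 + a) / 2) :
    ∃ c : ℝ, 0 < c ∧ ∀ y₁ y₂ : ℂ, ‖y₁‖ = 1 → ‖y₂‖ = 1 →
      ∫ x in Metric.ball (0 : ℂ) 1,
          (1 - ‖x‖) ^ a * |poissonKernelUnitDisc x y₁ - poissonKernelUnitDisc x y₂| ^ p
        ≤ c * ‖y₁ - y₂‖ ^ ((2 + a) / 2 - ε) := by
  subst hpa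
  set K := ∫ x in ball (0 : ℂ) 2, ‖x‖ ^ (ε - 2)
  have hK : 0 ≤ K := integral_nonneg fun x => by positivity
  refine ⟨(2 / π) ^ ((2 + a) / 2) * (2 * K) + 1, by positivity, fun y₁ y₂ hy₁ hy₂ => ?_⟩
  refine (setIntegral_one_sub_norm_rpow_mul_abs_poissonKernelUnitDisc_sub_rpow_le
    ha hε hε'.le hy₁ hy₂).trans ?_
  gcongr
  exact le_add_of_nonneg_right zero_le_one
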